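/- Combining the bipartition upper bound and the max-degree lower bound: if G, H are bipartite graphs with parts (A_G, B_G) and (A_H, B_H), no isolated vertices, and 1/(Δ(G)+Δ(H)+1) ≥ (|A_G|/(|A_G|+|B_G|))·(|A_H|/(|A_H|+|B_H|)), then γ(G □ H) ≥ γ(G)·γ(H). -/

import Mathlib

/-!
A set `D` of vertices dominates at most `|D| (Δ + 1)` vertices, and degrees add in a Cartesian
product, so `|V(G)| |V(H)| ≤ γ(G □ H) (Δ(G) + Δ(H) + 1)`. In a bipartite graph without isolated
vertices each part is dominating, so `γ(G) γ(H) ≤ |A_G| |A_H|`, and the hypothesis says exactly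
that `(Δ(G) + Δ(H) + 1) |A_G| |A_H| ≤ |V(G)| |V(H)|`.
-/

def IsDominatingSet {V : Type*} (G : SimpleGraph V) (D : Set V) : Prop :=
  ∀ v, v ∈ D ∨ ∃ u ∈ D, G.Adj u v

noncomputable def domNum {V : Type*} (G : SimpleGraph V) [Fintype V] : ℕ :=
  sInf {n | ∃ D : Finset V, IsDominatingSet G ↑D ∧ D.card = n}

noncomputable def maxDeg {V : Type*} (G : SimpleGraph V) [Fintype V] : ℕ :=
  Finset.univ.sup fun v => (G.neighborSet v).ncard

def IsBipartition {V : Type*} (G : SimpleGraph V) (A B : Finset V) : Prop :=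
  Disjoint A B ∧ (∀ v, v ∈ A ∨ v ∈ B) ∧
    ∀ u v, G.Adj u v → (u ∈ A ∧ v ∈ B) ∨ (u ∈ B ∧ v ∈ A)

open SimpleGraph

section Graph

variable {V W : Type*} [Fintype V] [Fintype W] (G : SimpleGraph V) (H : SimpleGraph W)

lemma domNum_le_card {D : Finset V} (hD : IsDominatingSet G D) : domNum G ≤ D.card :=
  Nat.sInf_le ⟨D, hD, rfl⟩

lemma exists_isDominatingSet_card_eq_domNum :
    ∃ D : Finset V, IsDominatingSet G D ∧ D.card = domNum G := by
  have huniv : IsDominatingSet G (Finset.univ : Finset V) := fun v => Or.inl (by simp)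
  exact Nat.sInf_mem (s := {n | ∃ D : Finset V, IsDominatingSet G D ∧ D.card = n})
    ⟨_, _, huniv, rfl⟩

lemma degree_le_maxDeg [DecidableRel G.Adj] (v : V) : G.degree v ≤ maxDeg G := by
  have h : (G.neighborSet v).ncard ≤ maxDeg G :=
    Finset.le_sup (f := fun v => (G.neighborSet v).ncard) (Finset.mem_univ v)
  rwa [Set.ncard_eq_toFinset_card', ← neighborFinset_def, card_neighborFinset_eq_degree] at h

lemma maxDeg_boxProd_le : maxDeg (G □ H) ≤ maxDeg G + maxDeg H := by
  classical
  refine Finset.sup_le fun x _ => ?_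
  rw [Set.ncard_eq_toFinset_card', ← neighborFinset_def, card_neighborFinset_eq_degree,
    degree_boxProd]
  exact add_le_add (degree_le_maxDeg G x.1) (degree_le_maxDeg H x.2)

lemma card_le_domNum_mul_maxDeg_add_one : Fintype.card V ≤ domNum G * (maxDeg G + 1) := by
  classical
  obtain ⟨D, hD, hcard⟩ := exists_isDominatingSet_card_eq_domNum G
  have hcover : Finset.univ ⊆ D.biUnion fun u => insert u (G.neighborFinset u) := by
    intro v _
    rcases hD v with hv | ⟨u, hu, huv⟩
    · exact Finset.mem_biUnion.2 ⟨v, hv, Finset.mem_insert_self _ _⟩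
    · exact Finset.mem_biUnion.2
        ⟨u, hu, Finset.mem_insert_of_mem ((G.mem_neighborFinset u v).2 huv)⟩
  rw [← hcard, ← Finset.card_univ]
  refine (Finset.card_le_card hcover).trans (Finset.card_biUnion_le_card_mul _ _ _ fun u _ => ?_)
  exact (Finset.card_insert_le _ _).trans (Nat.succ_le_succ (degree_le_maxDeg G u))

lemma card_mul_card_le_domNum_boxProd_mul :
    Fintype.card V * Fintype.card W ≤ domNum (G □ H) * (maxDeg G + maxDeg H + 1) :=
  calc Fintype.card V * Fintype.card W = Fintype.card (V × W) := Fintype.card_prod V W |>.symm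
    _ ≤ domNum (G □ H) * (maxDeg (G □ H) + 1) := card_le_domNum_mul_maxDeg_add_one _
    _ ≤ domNum (G □ H) * (maxDeg G + maxDeg H + 1) := by
      gcongr; exact maxDeg_boxProd_le G H

end Graph

namespace IsBipartition

variable {V : Type*} {G : SimpleGraph V} {A B : Finset V}

lemma isDominatingSet_left (h : IsBipartition G A B) (hiso : ∀ v, ∃ u, G.Adj v u) :
    IsDominatingSet G A := by
  intro v
  rcases h.2.1 v with hvA | hvB
  · exact Or.inl hvA
  · obtain ⟨u, hvu⟩ := hiso v
    rcases h.2.2 v u hvu with ⟨hvA, -⟩ | ⟨-, huA⟩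
    · exact (Finset.disjoint_left.1 h.1 hvA hvB).elim
    · exact Or.inr ⟨u, huA, hvu.symm⟩

lemma card_add_card [Fintype V] (h : IsBipartition G A B) : A.card + B.card = Fintype.card V := by
  classical
  rw [← Finset.card_union_of_disjoint h.1, ← Finset.card_univ]
  exact congrArg Finset.card (Finset.eq_univ_of_forall fun v => Finset.mem_union.2 (h.2.1 v))

end IsBipartition

lemma add_one_mul_mul_le_of_div_mul_div_le {d a b c e : ℕ}
    (h : (a : ℚ) / (a + b) * (c / (c + e)) ≤ 1 / (d + 1)) :
    (d + 1) * (a * c) ≤ (a + b) * (c + e) := by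
  rcases Nat.eq_zero_or_pos a with rfl | ha
  · simp
  rcases Nat.eq_zero_or_pos c with rfl | hc
  · simp
  rw [div_mul_div_comm, div_le_div_iff₀ (by positivity) (by positivity)] at h
  exact_mod_cast (by linarith : ((d + 1) * (a * c) : ℚ) ≤ (a + b) * (c + e))

theorem stmt6 {V W : Type*} [Fintype V] [Fintype W]
    (G : SimpleGraph V) (H : SimpleGraph W)
    (AG BG : Finset V) (AH BH : Finset W)
    (hGbip : IsBipartition G AG BG) (hHbip : IsBipartition H AH BH)
    (hGiso : ∀ v : V, ∃ u, G.Adj v u) (hHiso : ∀ v : W, ∃ u, H.Adj v u)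
    (hcond : (1 : ℚ) / ((maxDeg G : ℚ) + maxDeg H + 1) ≥
      ((AG.card : ℚ) / ((AG.card : ℚ) + BG.card)) *
        ((AH.card : ℚ) / ((AH.card : ℚ) + BH.card))) :
    domNum (G □ H) ≥ domNum G * domNum H := by
  have hparts : (maxDeg G + maxDeg H + 1) * (AG.card * AH.card) ≤
      (maxDeg G + maxDeg H + 1) * domNum (G □ H) :=
    calc (maxDeg G + maxDeg H + 1) * (AG.card * AH.card)
        ≤ (AG.card + BG.card) * (AH.card + BH.card) :=
          add_one_mul_mul_le_of_div_mul_div_le (by push_cast; exact hcond)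
      _ = Fintype.card V * Fintype.card W := by rw [hGbip.card_add_card, hHbip.card_add_card]
      _ ≤ domNum (G □ H) * (maxDeg G + maxDeg H + 1) := card_mul_card_le_domNum_boxProd_mul G H
      _ = (maxDeg G + maxDeg H + 1) * domNum (G □ H) := mul_comm _ _
  calc domNum G * domNum H ≤ AG.card * AH.card :=
        Nat.mul_le_mul (domNum_le_card G (hGbip.isDominatingSet_left hGiso))
          (domNum_le_card H (hHbip.isDominatingSet_left hHiso))
    _ ≤ domNum (G □ H) := Nat.le_of_mul_le_mul_left hparts (Nat.succ_pos _)
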